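/- arXiv:2011.11672 — 2 statements merged into one kernel-verified Lean document; each statement's English description precedes it below -/
import Mathlib

section
/- Let S be a circle of radius R centered at t, and C the circle of radius r centered at t with 0 < r ≤ R. Suppose a ∈ S, b ∈ C, and the segment ab meets C only at b (equivalently, every point of ab other than b is at distance > r from t). Then the angle at t between ta and tb is at most arccos(r/R). -/
/-!
Put `u = a - t` and `v = b - t`. Since `b` is the point of the segment `ab` closest to `t`, the
variational inequality for nearest points of convex sets gives `⟪t - b, a - b⟫ ≤ 0`, that is
`r² = ‖v‖² ≤ ⟪u, v⟫`. Hence `cos ∠atb = ⟪u, v⟫ / (R r) ≥ r / R`, and `arccos` is antitone.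
-/

open Real

open scoped RealInnerProductSpace

variable {F : Type*} [NormedAddCommGroup F] [InnerProductSpace ℝ F]

theorem norm_sub_sq_le_inner_of_isMinOn_segment {t a b : F}
    (hmin : IsMinOn (fun x => ‖x - t‖) (segment ℝ a b) b) :
    ‖b - t‖ ^ 2 ≤ ⟪a - t, b - t⟫ := by
  have hb : b ∈ segment ℝ a b := right_mem_segment ℝ a b
  have : Nonempty (segment ℝ a b) := ⟨⟨b, hb⟩⟩
  have hinf : ‖t - b‖ = ⨅ w : segment ℝ a b, ‖t - w‖ := by
    have hbdd : BddBelow (Set.range fun w : segment ℝ a b => ‖t - w‖) :=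
      ⟨0, Set.forall_mem_range.2 fun _ => norm_nonneg _⟩
    refine le_antisymm (le_ciInf fun w => ?_) (ciInf_le hbdd ⟨b, hb⟩)
    rw [norm_sub_rev t, norm_sub_rev t]
    exact hmin w.2
  have hvar : ⟪t - b, a - b⟫ ≤ 0 :=
    (norm_eq_iInf_iff_real_inner_le_zero (convex_segment a b) hb).1 hinf a (left_mem_segment ℝ a b)
  have hsplit : ⟪a - t, b - t⟫ = ‖b - t‖ ^ 2 - ⟪t - b, a - b⟫ := by
    rw [← sub_add_sub_cancel a b t, inner_add_left, real_inner_self_eq_norm_sq, ← neg_sub t b,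
      inner_neg_right, real_inner_comm]
    ring
  linarith

theorem InnerProductGeometry.angle_le_arccos_norm_div_norm {u v : F}
    (h : ‖v‖ ^ 2 ≤ ⟪u, v⟫) : angle u v ≤ arccos (‖v‖ / ‖u‖) := by
  have hratio : ‖v‖ / ‖u‖ = ‖v‖ ^ 2 / (‖u‖ * ‖v‖) := by
    rcases eq_or_ne ‖v‖ 0 with hv | hv
    · simp [hv]
    · field_simp
  rw [angle, hratio]
  exact arccos_le_arccos (div_le_div_of_nonneg_right h (by positivity))

theorem stmt_7_general (t a b : EuclideanSpace ℝ (Fin 2)) (r R : ℝ)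
    (ha : dist a t = R) (hb : dist b t = r)
    (hseg : ∀ x ∈ segment ℝ a b, r ≤ dist x t) :
    EuclideanGeometry.angle a t b ≤ Real.arccos (r / R) := by
  have hmin : IsMinOn (fun x => ‖x - t‖) (segment ℝ a b) b := fun x hx => by
    simpa only [Set.mem_ofPred_eq, ← dist_eq_norm, hb] using hseg x hx
  have key := InnerProductGeometry.angle_le_arccos_norm_div_norm
    (norm_sub_sq_le_inner_of_isMinOn_segment hmin)
  rwa [← dist_eq_norm, ← dist_eq_norm, ha, hb] at key

/-- If `a` is on the circle of radius `R` around `t`, `b` on the circle of radius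
`r ≤ R`, and the segment `ab` stays outside the open disk of radius `r`
(meeting the circle `C` only at `b`), then the angle at `t` between `a` and `b`
is at most `arccos (r/R)`. -/
theorem stmt_7 (t a b : EuclideanSpace ℝ (Fin 2)) (r R : ℝ)
    (hr : 0 < r) (hrR : r ≤ R)
    (ha : dist a t = R) (hb : dist b t = r)
    (hseg : ∀ x ∈ segment ℝ a b, r ≤ dist x t) :
    EuclideanGeometry.angle a t b ≤ Real.arccos (r / R) :=
  stmt_7_general t a b r R ha hb hseg
end

section
/- Let t be the origin and let b, b' be two points with t, b', b collinear and b' strictly between t and b (so |b' − t| < |b − t|). Let σ be the closed circular sector with center b, radii segment bt and a segment bc with ∠tbc = ρ ∈ (0, π/2], and let σ' be the closed circular sector with center b', radius |b' − t|, bounded by b't and the rotation of b't about b' by the same angle ρ in the same rotational direction. Then σ' ⊆ σ. -/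
/-!
Writing `b' = t + u • (b - t)` with `u ∈ [0, 1]`, the sector at `b'` is the image of the sector
at `b` under the homothety with centre `t` and ratio `u`. Both sectors are affine images of the
unit sector `{l e^{iφ} : 0 ≤ l ≤ 1, 0 ≤ φ ≤ ρ}`, which for `ρ ≤ π` is convex (an intersection of
the unit disc with two half-planes) and contains `1`, the point corresponding to `t`; so the
homothety maps the sector at `b` into itself.
-/

open Real

open Complex in
def unitSector (ρ : ℝ) : Set ℂ :=
  {z | ∃ l φ : ℝ, 0 ≤ l ∧ l ≤ 1 ∧ 0 ≤ φ ∧ φ ≤ ρ ∧ z = l * exp (φ * I)}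

namespace unitSector

open Complex

variable {ρ : ℝ}

lemma one_mem (hρ : 0 ≤ ρ) : 1 ∈ unitSector ρ :=
  ⟨1, 0, zero_le_one, le_rfl, le_rfl, hρ, by simp⟩

lemma eq_closedBall_inter_halfSpaces (hρ₀ : 0 < ρ) (hρ₁ : ρ ≤ π) :
    unitSector ρ = Metric.closedBall 0 1 ∩ {z | 0 ≤ z.im} ∩
      {z | z.im * Real.cos ρ - z.re * Real.sin ρ ≤ 0} := by
  ext z
  simp only [Set.mem_inter_iff, Set.mem_ofPred_eq, mem_closedBall_zero_iff]
  constructor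
  · rintro ⟨l, φ, hl0, hl1, hφ0, hφρ, rfl⟩
    have hre : (l * exp (φ * I)).re = l * Real.cos φ := by simp [exp_ofReal_mul_I_re]
    have him : (l * exp (φ * I)).im = l * Real.sin φ := by simp [exp_ofReal_mul_I_im]
    refine ⟨⟨?_, ?_⟩, ?_⟩
    · simpa [norm_exp_ofReal_mul_I, abs_of_nonneg hl0] using hl1
    · rw [him]
      exact mul_nonneg hl0 (sin_nonneg_of_nonneg_of_le_pi hφ0 (by linarith))
    · calc _ = l * Real.sin (φ - ρ) := by rw [hre, him, Real.sin_sub]; ring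
        _ ≤ 0 := mul_nonpos_of_nonneg_of_nonpos hl0
          (sin_nonpos_of_nonpos_of_neg_pi_le (by linarith) (by linarith))
  · rintro ⟨⟨hz1, him⟩, hρz⟩
    refine ⟨‖z‖, arg z, norm_nonneg z, hz1, arg_nonneg_iff.2 him, ?_,
      (norm_mul_exp_arg_mul_I z).symm⟩
    by_contra! hlt
    have hz : 0 < ‖z‖ := norm_pos_iff.2 fun h => by simp [h] at hlt; linarith
    have hsin : 0 < Real.sin (arg z - ρ) :=
      sin_pos_of_pos_of_lt_pi (by linarith) (by linarith [arg_le_pi z])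
    have hpolar : z.im * Real.cos ρ - z.re * Real.sin ρ = ‖z‖ * Real.sin (arg z - ρ) := by
      rw [Real.sin_sub, ← norm_mul_cos_arg z, ← norm_mul_sin_arg z]; ring
    linarith [mul_pos hz hsin]

lemma convex (hρ₀ : 0 < ρ) (hρ₁ : ρ ≤ π) : Convex ℝ (unitSector ρ) := by
  rw [eq_closedBall_inter_halfSpaces hρ₀ hρ₁]
  refine ((convex_closedBall 0 1).inter (convex_halfSpace_im_ge 0)).inter
    (convex_halfSpace_le ⟨fun z w => ?_, fun c z => ?_⟩ 0) <;>
    simp only [add_re, add_im, smul_re, smul_im, smul_eq_mul] <;> ring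

end unitSector

theorem stmt_17_general (t b b' : ℂ) (ρ : ℝ) (hρ₀ : 0 < ρ) (hρ₁ : ρ ≤ π / 2)
    (hb' : b' ∈ segment ℝ t b) :
    {x : ℂ | ∃ l φ : ℝ, 0 ≤ l ∧ l ≤ 1 ∧ 0 ≤ φ ∧ φ ≤ ρ ∧
      x = b' + (l : ℂ) * Complex.exp ((φ : ℂ) * Complex.I) * (t - b')} ⊆
    {x : ℂ | ∃ l φ : ℝ, 0 ≤ l ∧ l ≤ 1 ∧ 0 ≤ φ ∧ φ ≤ ρ ∧
      x = b + (l : ℂ) * Complex.exp ((φ : ℂ) * Complex.I) * (t - b)} := by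
  rw [segment_eq_image'] at hb'
  obtain ⟨u, ⟨hu0, hu1⟩, rfl⟩ := hb'
  rintro x ⟨l, φ, hl0, hl1, hφ0, hφρ, rfl⟩
  have hw : (l : ℂ) * Complex.exp (φ * Complex.I) ∈ unitSector ρ :=
    ⟨l, φ, hl0, hl1, hφ0, hφρ, rfl⟩
  obtain ⟨l', φ', hl'0, hl'1, hφ'0, hφ'ρ, hz⟩ :=
    unitSector.convex hρ₀ (by linarith [pi_pos]) (unitSector.one_mem hρ₀.le) hw
      (sub_nonneg.2 hu1) hu0 (sub_add_cancel 1 u)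
  refine ⟨l', φ', hl'0, hl'1, hφ'0, hφ'ρ, ?_⟩
  simp only [Complex.real_smul] at hz ⊢
  rw [← hz]
  push_cast
  ring

/-- Sector nesting: if `b'` lies strictly between `t` and `b` on segment `tb`,
then the closed circular sector centered at `b'` with radius `|b' − t|`,
starting at the ray toward `t` and sweeping angle `ρ ∈ (0, π/2]`, is contained
in the corresponding sector centered at `b`. -/
theorem stmt_17 (t b b' : ℂ) (ρ : ℝ) (hρ₀ : 0 < ρ) (hρ₁ : ρ ≤ π / 2)
    (hb' : b' ∈ segment ℝ t b) (hne : ‖b' - t‖ < ‖b - t‖) :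
    {x : ℂ | ∃ l φ : ℝ, 0 ≤ l ∧ l ≤ 1 ∧ 0 ≤ φ ∧ φ ≤ ρ ∧
      x = b' + (l : ℂ) * Complex.exp ((φ : ℂ) * Complex.I) * (t - b')} ⊆
    {x : ℂ | ∃ l φ : ℝ, 0 ≤ l ∧ l ≤ 1 ∧ 0 ≤ φ ∧ φ ≤ ρ ∧
      x = b + (l : ℂ) * Complex.exp ((φ : ℂ) * Complex.I) * (t - b)} :=
  stmt_17_general t b b' ρ hρ₀ hρ₁ hb'
end
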